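/- arXiv:2511.18190 — 4 statements merged into one kernel-verified Lean document; each statement's English description precedes it below -/
import Mathlib

section
/- Let F : ℂ^n → ℂ^n be an entire holomorphic map and let K ⊆ ℂ^n be a compact polynomially convex set such that F^{-1}(K) is compact. Then F^{-1}(K) is polynomially convex. -/
/-!
For `w ∉ F⁻¹(K)`, polynomial convexity of `K` gives a polynomial `P` with `|P| < |P(F w)|` on `K`,
so the entire function `g = P ∘ F` satisfies `|g| < |g w|` on the compact set `F⁻¹(K)`. It remains
to replace `g` by a polynomial: entire functions on `ℂⁿ` are uniform limits of polynomials on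
compact sets.

That approximation is proved by induction on `n`, avoiding power series in several variables. In
the first variable, `g` is replaced on the disc of radius `r` by its interpolation polynomial of
degree `< k` at the nodes `r ω^l` (`ω` a primitive `k`-th root of unity); its coefficients are
finite combinations of the entire functions `g (r ω^l, ·)` of the remaining variables, which the
induction hypothesis approximates. Interpolation at these nodes sends `z^p` to
`r^p (z/r)^(p mod k)`, so only the Taylor coefficients of index `≥ k` contribute to the error, and
Cauchy's estimates on the circle of radius `2r` make it `O(2⁻ᵏ)`.
-/

open Complex Metric

noncomputable section

/-- A compact set `K ⊆ ℂⁿ` is polynomially convex. -/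
def IsPolyConvex {n : ℕ} (K : Set (Fin n → ℂ)) : Prop :=
  ∀ w : Fin n → ℂ, w ∉ K → ∃ P : MvPolynomial (Fin n) ℂ,
    ∀ z ∈ K, ‖MvPolynomial.eval z P‖ < ‖MvPolynomial.eval w P‖

open Filter Finset MvPolynomial Topology

theorem IsPrimitiveRoot.sum_pow_mul_inv_pow {K : Type*} [Field K] {ω : K} {k i j : ℕ}
    (hω : IsPrimitiveRoot ω k) (hi : i < k) (hj : j < k) :
    ∑ l ∈ range k, (ω ^ i * ω⁻¹ ^ j) ^ l = if i = j then (k : K) else 0 := by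
  have hω0 : ω ≠ 0 := hω.ne_zero (by omega)
  split_ifs with hij
  · simp [hij, hω0]
  · have hne : ω ^ i * ω⁻¹ ^ j ≠ 1 := by
      rw [inv_pow, ← div_eq_mul_inv, Ne, div_eq_one_iff_eq (pow_ne_zero _ hω0)]
      exact fun h => hij (hω.pow_inj hi hj h)
    have hpow : (ω ^ i * ω⁻¹ ^ j) ^ k = 1 := by
      rw [mul_pow, ← pow_mul, ← pow_mul, mul_comm i, mul_comm j, pow_mul, pow_mul, hω.pow_eq_one,
        inv_pow, hω.pow_eq_one]
      simp
    rw [geom_sum_eq hne, hpow, sub_self, zero_div]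

def circleNode (k : ℕ) (r : ℝ) (l : ℕ) : ℂ := r * exp (2 * Real.pi * I / k) ^ l

/-- For `k ≠ 0` and `r ≠ 0`: the polynomial of degree `< k` taking the value `v l` at
`circleNode k r l` for `l < k`, evaluated at `z`. -/
def circleInterpolant {A : Type*} [CommRing A] [Algebra ℂ A] (k : ℕ) (r : ℝ) (v : ℕ → A) (z : A) :
    A :=
  ∑ j ∈ range k, ∑ l ∈ range k, ((k : ℂ)⁻¹ * (circleNode k r l)⁻¹ ^ j) • (v l * z ^ j)

section circleInterpolant

variable {k : ℕ} {r : ℝ}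

theorem norm_circleNode (hr : 0 ≤ r) (hk : k ≠ 0) (l : ℕ) : ‖circleNode k r l‖ = r := by
  simp [circleNode, (isPrimitiveRoot_exp k hk).norm'_eq_one hk, abs_of_nonneg hr]

theorem AlgHom.map_circleInterpolant {A B : Type*} [CommRing A] [Algebra ℂ A] [CommRing B]
    [Algebra ℂ B] (φ : A →ₐ[ℂ] B) (v : ℕ → A) (z : A) :
    φ (circleInterpolant k r v z) = circleInterpolant k r (φ ∘ v) (φ z) := by
  simp [circleInterpolant, map_sum, map_smul, map_mul, map_pow]

theorem circleInterpolant_sub {A : Type*} [CommRing A] [Algebra ℂ A] (v w : ℕ → A) (z : A) :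
    circleInterpolant k r (fun l => v l - w l) z =
      circleInterpolant k r v z - circleInterpolant k r w z := by
  simp only [circleInterpolant, ← sum_sub_distrib, sub_mul, smul_sub]

theorem norm_circleInterpolant_le (hr : 0 < r) {v : ℕ → ℂ} {η : ℝ} (hv : ∀ l < k, ‖v l‖ ≤ η)
    {z : ℂ} (hz : ‖z‖ ≤ r) : ‖circleInterpolant k r v z‖ ≤ k * η := by
  rcases Nat.eq_zero_or_pos k with rfl | hk
  · simp [circleInterpolant]
  have hterm : ∀ j ∈ range k, ∀ l ∈ range k,
      ‖((k : ℂ)⁻¹ * (circleNode k r l)⁻¹ ^ j) • (v l * z ^ j)‖ ≤ (k : ℝ)⁻¹ * η := by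
    intro j _ l hl
    have hzr : (‖z‖ / r) ^ j ≤ 1 := pow_le_one₀ (by positivity) ((div_le_one hr).2 hz)
    calc ‖((k : ℂ)⁻¹ * (circleNode k r l)⁻¹ ^ j) • (v l * z ^ j)‖
        = (k : ℝ)⁻¹ * (‖v l‖ * (‖z‖ / r) ^ j) := by
          simp only [smul_eq_mul, norm_mul, norm_inv, norm_pow, norm_circleNode hr.le hk.ne',
            Complex.norm_natCast, div_pow]
          ring
      _ ≤ (k : ℝ)⁻¹ * η := by
          gcongr
          exact (mul_le_of_le_one_right (norm_nonneg _) hzr).trans (hv l (mem_range.1 hl))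
  calc ‖circleInterpolant k r v z‖
      ≤ ∑ j ∈ range k, ∑ l ∈ range k, (k : ℝ)⁻¹ * η :=
        (norm_sum_le _ _).trans <| sum_le_sum fun j hj =>
          (norm_sum_le _ _).trans <| sum_le_sum fun l hl => hterm j hj l hl
    _ = k * η := by
        simp only [sum_const, card_range, nsmul_eq_mul]
        field_simp

theorem circleInterpolant_pow (hk : k ≠ 0) (p : ℕ) (z : ℂ) :
    circleInterpolant k r (fun l => circleNode k r l ^ p) z = r ^ p * (z / r) ^ (p % k) := by
  set ω := exp (2 * Real.pi * I / k)
  have hω : IsPrimitiveRoot ω k := isPrimitiveRoot_exp k hk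
  have hωp : ω ^ p = ω ^ (p % k) := pow_eq_pow_mod p hω.pow_eq_one
  have hterm : ∀ j l : ℕ, ((k : ℂ)⁻¹ * (circleNode k r l)⁻¹ ^ j) • (circleNode k r l ^ p * z ^ j)
      = (k : ℂ)⁻¹ * r ^ p * (z / r) ^ j * (ω ^ (p % k) * ω⁻¹ ^ j) ^ l := by
    intro j l
    have : (ω ^ l) ^ p = (ω ^ (p % k)) ^ l := by rw [← pow_mul, mul_comm, pow_mul, hωp]
    rw [show circleNode k r l = r * ω ^ l from rfl, smul_eq_mul, mul_pow, this]
    field_simp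
    ring
  simp only [circleInterpolant, hterm, ← mul_sum]
  rw [sum_eq_single (p % k)]
  · rw [hω.sum_pow_mul_inv_pow (Nat.mod_lt _ (by omega)) (Nat.mod_lt _ (by omega)), if_pos rfl]
    field_simp
  · intro j hj hne
    rw [hω.sum_pow_mul_inv_pow (Nat.mod_lt _ (by omega)) (mem_range.1 hj), if_neg (Ne.symm hne),
      mul_zero]
  · exact fun h => absurd (mem_range.2 (Nat.mod_lt _ (by omega))) h

theorem norm_circleInterpolant_pow_le (hr : 0 < r) (hk : k ≠ 0) (p : ℕ) {z : ℂ} (hz : ‖z‖ ≤ r) :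
    ‖circleInterpolant k r (fun l => circleNode k r l ^ p) z‖ ≤ r ^ p := by
  have hzr : ‖z / r‖ ≤ 1 := by
    rw [norm_div, Complex.norm_real, Real.norm_of_nonneg hr.le]
    exact (div_le_one hr).2 hz
  rw [circleInterpolant_pow hk, norm_mul, norm_pow, Complex.norm_real, Real.norm_of_nonneg hr.le,
    norm_pow]
  exact mul_le_of_le_one_right (by positivity) (pow_le_one₀ (norm_nonneg _) hzr)

theorem norm_pow_sub_circleInterpolant_pow_le (hr : 0 < r) (hk : k ≠ 0) (p : ℕ) {z : ℂ}
    (hz : ‖z‖ ≤ r) :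
    ‖z ^ p - circleInterpolant k r (fun l => circleNode k r l ^ p) z‖ ≤ 2 * r ^ p := by
  rw [two_mul]
  exact norm_sub_le_of_le ((norm_pow z p).trans_le (pow_le_pow_left₀ (norm_nonneg z) hz p))
    (norm_circleInterpolant_pow_le hr hk p hz)

theorem circleInterpolant_pow_of_lt {p : ℕ} (hr : r ≠ 0) (hp : p < k) (z : ℂ) :
    circleInterpolant k r (fun l => circleNode k r l ^ p) z = z ^ p := by
  rw [circleInterpolant_pow (by omega), Nat.mod_eq_of_lt hp, div_pow, mul_div_cancel₀]
  exact pow_ne_zero _ (by exact_mod_cast hr)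

theorem hasSum_circleInterpolant {a : ℕ → ℂ} {h : ℂ → ℂ}
    (ha : ∀ ζ, HasSum (fun p => a p * ζ ^ p) (h ζ)) (z : ℂ) :
    HasSum (fun p => a p * circleInterpolant k r (fun l => circleNode k r l ^ p) z)
      (circleInterpolant k r (fun l => h (circleNode k r l)) z) := by
  simp only [circleInterpolant, mul_sum, smul_eq_mul]
  refine hasSum_sum fun j _ => hasSum_sum fun l _ => ?_
  exact (((ha (circleNode k r l)).mul_right (z ^ j)).mul_left
    ((k : ℂ)⁻¹ * (circleNode k r l)⁻¹ ^ j)).congr_fun fun p => by ring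

end circleInterpolant

theorem hasSum_inv_two_pow_ite (k : ℕ) :
    HasSum (fun p => if k ≤ p then (2 : ℝ)⁻¹ ^ p else 0) (2 * 2⁻¹ ^ k) := by
  rw [← tsum_geometric_inv_two_ge]
  refine (Summable.of_nonneg_of_le (fun p => ?_) (fun p => ?_) summable_geometric_two).hasSum
  · split_ifs <;> positivity
  · split_ifs <;> simp

theorem norm_taylorCoeff_le {h : ℂ → ℂ} (hh : Differentiable ℂ h) {R M : ℝ} (hR : 0 < R)
    (hM : ∀ ζ ∈ sphere (0 : ℂ) R, ‖h ζ‖ ≤ M) (p : ℕ) :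
    ‖(p.factorial : ℂ)⁻¹ * iteratedDeriv p h 0‖ ≤ M / R ^ p := by
  have hp : (0 : ℝ) < p.factorial := by exact_mod_cast p.factorial_pos
  calc ‖(p.factorial : ℂ)⁻¹ * iteratedDeriv p h 0‖
      = (p.factorial : ℝ)⁻¹ * ‖iteratedDeriv p h 0‖ := by simp
    _ ≤ (p.factorial : ℝ)⁻¹ * (p.factorial * M / R ^ p) := by
        gcongr
        exact Complex.norm_iteratedDeriv_le_of_forall_mem_sphere_norm_le p hR hh.diffContOnCl hM
    _ = M / R ^ p := by field_simp

theorem norm_sub_circleInterpolant_le {h : ℂ → ℂ} (hh : Differentiable ℂ h) {k : ℕ} (hk : k ≠ 0)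
    {r M : ℝ} (hr : 0 < r) (hM : ∀ ζ ∈ sphere (0 : ℂ) (2 * r), ‖h ζ‖ ≤ M) {z : ℂ}
    (hz : ‖z‖ ≤ r) :
    ‖h z - circleInterpolant k r (fun l => h (circleNode k r l)) z‖ ≤ 4 * M * 2⁻¹ ^ k := by
  set a : ℕ → ℂ := fun p => (p.factorial : ℂ)⁻¹ * iteratedDeriv p h 0
  have ha : ∀ ζ, HasSum (fun p => a p * ζ ^ p) (h ζ) := fun ζ => by
    simpa [a, smul_eq_mul, mul_assoc, mul_comm, mul_left_comm] using
      Complex.hasSum_taylorSeries_of_entire hh 0 ζ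
  have hbound : ∀ p, ‖a p * (z ^ p - circleInterpolant k r (fun l => circleNode k r l ^ p) z)‖ ≤
      2 * M * if k ≤ p then (2 : ℝ)⁻¹ ^ p else 0 := by
    intro p
    split_ifs with hkp
    · calc ‖a p * (z ^ p - circleInterpolant k r (fun l => circleNode k r l ^ p) z)‖
          ≤ M / (2 * r) ^ p * (2 * r ^ p) := by
            rw [norm_mul]
            gcongr
            · exact (norm_nonneg _).trans (norm_taylorCoeff_le hh (by positivity) hM p)
            · exact norm_taylorCoeff_le hh (by positivity) hM p
            · exact norm_pow_sub_circleInterpolant_pow_le hr hk p hz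
        _ = 2 * M * 2⁻¹ ^ p := by
            rw [mul_pow, inv_pow]
            field_simp
    · simp [circleInterpolant_pow_of_lt hr.ne' (not_le.1 hkp)]
  have := ((ha z).sub (hasSum_circleInterpolant ha z)).norm_le_of_bounded
    ((hasSum_inv_two_pow_ite k).mul_left (2 * M)) (by simpa only [mul_sub] using hbound)
  linarith

theorem norm_finCons_le {E : Type*} [SeminormedAddCommGroup E] {n : ℕ} {a : E} {y : Fin n → E}
    {R : ℝ} (ha : ‖a‖ ≤ R) (hy : ‖y‖ ≤ R) : ‖(Fin.cons a y : Fin (n + 1) → E)‖ ≤ R := by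
  rw [pi_norm_le_iff_of_nonneg ((norm_nonneg a).trans ha), Fin.forall_fin_succ]
  exact ⟨by simpa using ha, fun i => by simpa using (norm_le_pi_norm y i).trans hy⟩

theorem norm_finTail_le {E : Type*} [SeminormedAddCommGroup E] {n : ℕ} (x : Fin (n + 1) → E) :
    ‖Fin.tail x‖ ≤ ‖x‖ :=
  (pi_norm_le_iff_of_nonneg (norm_nonneg x)).2 fun i => norm_le_pi_norm x i.succ

theorem eval_circleInterpolant_rename_succ {n k : ℕ} {r : ℝ} (P : ℕ → MvPolynomial (Fin n) ℂ)
    (x : Fin (n + 1) → ℂ) :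
    eval x (circleInterpolant k r (fun l => rename Fin.succ (P l)) (X 0)) =
      circleInterpolant k r (fun l => eval (Fin.tail x) (P l)) (x 0) := by
  change aeval x _ = _
  rw [AlgHom.map_circleInterpolant]
  simp only [Function.comp_def, aeval_rename, aeval_X]
  rfl

theorem norm_sub_eval_circleInterpolant_le {n k : ℕ} {g : (Fin (n + 1) → ℂ) → ℂ}
    (hg : Differentiable ℂ g) (hk : k ≠ 0) {r M η : ℝ} (hr : 0 < r)
    (hM : ∀ x ∈ closedBall 0 (2 * r), ‖g x‖ ≤ M) {P : ℕ → MvPolynomial (Fin n) ℂ}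
    (hP : ∀ l, ∀ y ∈ closedBall 0 r, ‖g (Fin.cons (circleNode k r l) y) - eval y (P l)‖ ≤ η)
    {x : Fin (n + 1) → ℂ} (hx : x ∈ closedBall 0 r) :
    ‖g x - eval x (circleInterpolant k r (fun l => rename Fin.succ (P l)) (X 0))‖ ≤
      4 * M * 2⁻¹ ^ k + k * η := by
  rw [mem_closedBall_zero_iff] at hx
  have hy : ‖Fin.tail x‖ ≤ r := (norm_finTail_le x).trans hx
  have hx0 : ‖x 0‖ ≤ r := (norm_le_pi_norm x 0).trans hx
  have hsphere : ∀ ζ ∈ sphere (0 : ℂ) (2 * r), ‖g (Fin.cons ζ (Fin.tail x))‖ ≤ M := fun ζ hζ =>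
    hM _ (mem_closedBall_zero_iff.2 (norm_finCons_le (mem_sphere_zero_iff_norm.1 hζ).le
      (by linarith)))
  have hslice : Differentiable ℂ fun t => g (Fin.cons t (Fin.tail x)) :=
    hg.comp (differentiable_id.finCons (differentiable_const _) (F' := fun _ => ℂ))
  calc _ = ‖(g (Fin.cons (x 0) (Fin.tail x)) -
            circleInterpolant k r (fun l => g (Fin.cons (circleNode k r l) (Fin.tail x))) (x 0)) +
          circleInterpolant k r (fun l => g (Fin.cons (circleNode k r l) (Fin.tail x)) -
            eval (Fin.tail x) (P l)) (x 0)‖ := by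
        rw [eval_circleInterpolant_rename_succ, circleInterpolant_sub, Fin.cons_self_tail,
          sub_add_sub_cancel]
    _ ≤ 4 * M * 2⁻¹ ^ k + k * η :=
        norm_add_le_of_le (norm_sub_circleInterpolant_le hslice hk hr hsphere hx0)
          (norm_circleInterpolant_le hr (fun l _ => hP l _ (mem_closedBall_zero_iff.2 hy)) hx0)

theorem exists_mvPolynomial_approx_on_closedBall {n : ℕ} {g : (Fin n → ℂ) → ℂ}
    (hg : Differentiable ℂ g) {r : ℝ} (hr : 0 < r) {ε : ℝ} (hε : 0 < ε) :
    ∃ Q : MvPolynomial (Fin n) ℂ, ∀ x ∈ closedBall 0 r, ‖g x - eval x Q‖ ≤ ε := by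
  induction n generalizing ε with
  | zero =>
    refine ⟨C (g 0), fun x _ => ?_⟩
    simpa [Subsingleton.elim x 0] using hε.le
  | succ n ih =>
    obtain ⟨M, hM⟩ := (isCompact_closedBall (0 : Fin (n + 1) → ℂ) (2 * r))
      |>.exists_bound_of_continuousOn hg.continuous.continuousOn
    obtain ⟨k, hkε, hk⟩ : ∃ k : ℕ, 4 * M * 2⁻¹ ^ k ≤ ε / 2 ∧ k ≠ 0 := by
      have : Tendsto (fun k : ℕ => 4 * M * (2 : ℝ)⁻¹ ^ k) atTop (𝓝 0) := by
        simpa using (tendsto_pow_atTop_nhds_zero_of_lt_one (by norm_num : (0 : ℝ) ≤ 2⁻¹)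
          (by norm_num)).const_mul (4 * M)
      exact ((this.eventually (ge_mem_nhds (half_pos hε))).and (eventually_ne_atTop 0)).exists
    choose P hP using fun l => ih (hg.comp ((differentiable_const (circleNode k r l)).finCons
      differentiable_id)) (ε := ε / 2 / k) (by positivity)
    refine ⟨_, fun x hx => (norm_sub_eval_circleInterpolant_le hg hk hr hM hP hx).trans ?_⟩
    calc 4 * M * 2⁻¹ ^ k + k * (ε / 2 / k) ≤ ε / 2 + ε / 2 := by
          rw [mul_div_cancel₀ _ (by exact_mod_cast hk)]
          linarith
      _ = ε := add_halves ε

theorem exists_mvPolynomial_approx_on_compact {n : ℕ} {g : (Fin n → ℂ) → ℂ}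
    (hg : Differentiable ℂ g) {S : Set (Fin n → ℂ)} (hS : IsCompact S) {ε : ℝ} (hε : 0 < ε) :
    ∃ Q : MvPolynomial (Fin n) ℂ, ∀ x ∈ S, ‖g x - eval x Q‖ ≤ ε := by
  obtain ⟨r, hr, hSr⟩ := hS.isBounded.subset_closedBall_lt 0 0
  obtain ⟨Q, hQ⟩ := exists_mvPolynomial_approx_on_closedBall hg hr hε
  exact ⟨Q, fun x hx => hQ x (hSr hx)⟩

theorem isPolyConvex_of_separated_by_entire {n : ℕ} {S : Set (Fin n → ℂ)} (hS : IsCompact S)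
    (hsep : ∀ w ∉ S, ∃ g : (Fin n → ℂ) → ℂ, Differentiable ℂ g ∧ ∀ z ∈ S, ‖g z‖ < ‖g w‖) :
    IsPolyConvex S := by
  intro w hw
  obtain ⟨g, hg, hgw⟩ := hsep w hw
  rcases S.eq_empty_or_nonempty with rfl | hne
  · exact ⟨1, by simp⟩
  obtain ⟨z₀, hz₀, hmax⟩ := hS.exists_isMaxOn hne hg.continuous.norm.continuousOn
  have hδ : 0 < ‖g w‖ - ‖g z₀‖ := sub_pos.2 (hgw z₀ hz₀)
  obtain ⟨Q, hQ⟩ := exists_mvPolynomial_approx_on_compact hg (hS.insert w) (div_pos hδ three_pos)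
  refine ⟨Q, fun z hz => ?_⟩
  have hz' := hQ z (Set.mem_insert_of_mem w hz)
  have hw' := hQ w (Set.mem_insert w S)
  have : ‖g z‖ ≤ ‖g z₀‖ := hmax hz
  linarith [norm_sub_norm_le (eval z Q) (g z), norm_sub_rev (eval z Q) (g z),
    norm_sub_norm_le (g w) (eval w Q)]

theorem isPolyConvex_preimage_of_entire_general (n : ℕ) (F : (Fin n → ℂ) → (Fin n → ℂ))
    (hF : Differentiable ℂ F) (K : Set (Fin n → ℂ))
    (hKpc : IsPolyConvex K) (hpre : IsCompact (F ⁻¹' K)) :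
    IsPolyConvex (F ⁻¹' K) := by
  refine isPolyConvex_of_separated_by_entire hpre fun w hw => ?_
  obtain ⟨P, hP⟩ := hKpc (F w) hw
  refine ⟨fun z => eval (F z) P, fun z => ?_, fun z hz => hP (F z) hz⟩
  exact (AnalyticOnNhd.eval_mvPolynomial P (F z) trivial).differentiableAt.comp z (hF z)

/-- If `F : ℂⁿ → ℂⁿ` is an entire holomorphic map and `K ⊆ ℂⁿ` is a compact
polynomially convex set such that `F ⁻¹' K` is compact, then `F ⁻¹' K` is polynomially convex. -/
theorem isPolyConvex_preimage_of_entire (n : ℕ) (F : (Fin n → ℂ) → (Fin n → ℂ))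
    (hF : Differentiable ℂ F) (K : Set (Fin n → ℂ)) (hKc : IsCompact K)
    (hKpc : IsPolyConvex K) (hpre : IsCompact (F ⁻¹' K)) :
    IsPolyConvex (F ⁻¹' K) :=
  isPolyConvex_preimage_of_entire_general n F hF K hKpc hpre
end
end

section
/- Let γ > 1/2, r > 0, and let F : \bar{D}_r(0) → ℂ be a C²-smooth function with F(0) = 0, both first-order partial derivatives of F vanishing at 0, and ‖F‖_{C²(\bar{D}_r(0))} ≤ (2γ−1)³/(2¹⁴ γ³). Then for every ζ ∈ \bar{D}_r(0) with ζ ≠ 0 one has |4γ F(ζ,\bar ζ)/(ζ + 2γ\bar ζ)²| < 1/4, so that f(ζ,\bar ζ) := −((ζ + 2γ\bar ζ)/(2γ)) (1 − √(1 + 4γ F(ζ,\bar ζ)/(ζ + 2γ\bar ζ)²)) is well defined using the principal branch of the square root (with f(0) := 0); moreover f satisfies the quadratic equation γ f² + (ζ + 2γ\bar ζ) f − F(ζ,\bar ζ) = 0 and the bounds |f(ζ,\bar ζ)/(ζ + 2γ\bar ζ)| ≤ 8‖F‖_{C²}/(2γ−1)², and in particular |f(ζ,\bar ζ)| ≤ |ζ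 + 2γ\bar ζ|/(8γ). -/
/-!
Since `F` vanishes to second order at `0`, Taylor's theorem bounds `|F(ζ)|` by `4‖F‖_{C²}|ζ|²`,
while `|ζ + 2γζ̄| ≥ (2γ − 1)|ζ|`; together with the smallness of `‖F‖_{C²}` this makes
`u = 4γF/(ζ + 2γζ̄)²` smaller than `1/4`. The quadratic formula then solves the equation, and
because the principal square root `s` of `1 + u` has `Re s ≥ 0`, `|1 − s| = |u|/|1 + s| ≤ |u|`,
which gives both bounds on `f`.
-/

open Complex Metric ComplexConjugate

noncomputable section

/-- Directional partial derivative (over ℝ) of `F : ℂ → ℂ` along `v`;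
`pd 1 F = F_x` and `pd Complex.I F = F_y`. -/
def pd (v : ℂ) (F : ℂ → ℂ) : ℂ → ℂ := fun z => fderiv ℝ F z v

/-- `B` is a bound for all partial derivatives of order `≤ 2` of `F` (w.r.t. the real
coordinates `x, y`) on the set `s`; i.e. `‖F‖_{C²(s)} ≤ B`. -/
def IsC2Bound (F : ℂ → ℂ) (s : Set ℂ) (B : ℝ) : Prop :=
  ∀ z ∈ s, ‖F z‖ ≤ B ∧ ‖pd 1 F z‖ ≤ B ∧ ‖pd Complex.I F z‖ ≤ B ∧
    ‖pd 1 (pd 1 F) z‖ ≤ B ∧ ‖pd Complex.I (pd 1 F) z‖ ≤ B ∧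
    ‖pd 1 (pd Complex.I F) z‖ ≤ B ∧ ‖pd Complex.I (pd Complex.I F) z‖ ≤ B

namespace ContinuousLinearMap

variable {E : Type*} [NormedAddCommGroup E] [NormedSpace ℝ E]

theorem apply_eq_re_smul_add_im_smul (L : ℂ →L[ℝ] E) (v : ℂ) :
    L v = v.re • L 1 + v.im • L I := by
  conv_lhs => rw [← show v.re • (1 : ℂ) + v.im • I = v by simp [real_smul, re_add_im]]
  simp only [map_add, map_smul]

theorem opNorm_le_two_mul_of_norm_apply_one_le_of_norm_apply_I_le (L : ℂ →L[ℝ] E) {C : ℝ}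
    (hC : 0 ≤ C) (h1 : ‖L 1‖ ≤ C) (hI : ‖L I‖ ≤ C) : ‖L‖ ≤ 2 * C := by
  refine opNorm_le_bound _ (by linarith) fun v => ?_
  calc ‖L v‖ ≤ |v.re| * ‖L 1‖ + |v.im| * ‖L I‖ := by
        rw [apply_eq_re_smul_add_im_smul]
        exact (norm_add_le _ _).trans_eq (by simp only [norm_smul, Real.norm_eq_abs])
    _ ≤ ‖v‖ * C + ‖v‖ * C := by
        gcongr
        exacts [abs_re_le_norm v, abs_im_le_norm v]
    _ = 2 * C * ‖v‖ := by ring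

end ContinuousLinearMap

section SecondOrderTaylor

variable {E G : Type*} [NormedAddCommGroup E] [NormedSpace ℝ E] [NormedAddCommGroup G]
  [NormedSpace ℝ G] {f : E → G} {s : Set E} {C : ℝ}

/-- Two applications of the mean value inequality: first to `fderiv ℝ f` on `s`, then to `f`
on `s ∩ closedBall 0 ‖x‖`, where `‖fderiv ℝ f‖ ≤ C * ‖x‖`. -/
theorem Convex.norm_le_mul_sq_of_norm_fderiv_fderiv_le (hs : Convex ℝ s) (h0 : 0 ∈ s)
    (hf : ∀ x ∈ s, DifferentiableAt ℝ f x)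
    (hf' : ∀ x ∈ s, DifferentiableAt ℝ (fderiv ℝ f) x)
    (hbound : ∀ x ∈ s, ‖fderiv ℝ (fderiv ℝ f) x‖ ≤ C) (hf0 : f 0 = 0)
    (hDf0 : fderiv ℝ f 0 = 0) {x : E} (hx : x ∈ s) : ‖f x‖ ≤ C * ‖x‖ ^ 2 := by
  have hC : 0 ≤ C := (norm_nonneg (fderiv ℝ (fderiv ℝ f) 0)).trans (hbound 0 h0)
  have hDf : ∀ y ∈ s, ‖fderiv ℝ f y‖ ≤ C * ‖y‖ := fun y hy => by
    simpa [hDf0] using hs.norm_image_sub_le_of_norm_fderiv_le hf' hbound h0 hy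
  have := (hs.inter (convex_closedBall 0 ‖x‖)).norm_image_sub_le_of_norm_fderiv_le
    (fun y hy => hf y hy.1)
    (fun y hy => (hDf y hy.1).trans (mul_le_mul_of_nonneg_left (by simpa using hy.2) hC))
    ⟨h0, by simp⟩ ⟨hx, by simp⟩
  simpa [hf0, sq, mul_assoc] using this

end SecondOrderTaylor

section PartialDerivatives

variable {F : ℂ → ℂ} {z : ℂ} {s : Set ℂ} {B : ℝ}

theorem pd_pd_eq_fderiv_fderiv (hF : DifferentiableAt ℝ (fderiv ℝ F) z) (v w : ℂ) :
    pd w (pd v F) z = fderiv ℝ (fderiv ℝ F) z w v := by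
  change fderiv ℝ (fun y => fderiv ℝ F y v) z w = _
  rw [fderiv_clm_apply hF (differentiableAt_const v)]
  simp

theorem fderiv_eq_zero_of_pd_eq_zero (hx : pd 1 F z = 0) (hy : pd I F z = 0) :
    fderiv ℝ F z = 0 := by
  ext1 v
  rw [ContinuousLinearMap.apply_eq_re_smul_add_im_smul]
  simp only [pd] at hx hy
  simp [hx, hy]

theorem IsC2Bound.nonneg (hB : IsC2Bound F s B) (hz : z ∈ s) : 0 ≤ B :=
  (norm_nonneg _).trans (hB z hz).1

theorem IsC2Bound.norm_fderiv_fderiv_le (hB : IsC2Bound F s B) (hz : z ∈ s)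
    (hF : DifferentiableAt ℝ (fderiv ℝ F) z) : ‖fderiv ℝ (fderiv ℝ F) z‖ ≤ 4 * B := by
  obtain ⟨-, -, -, h11, hI1, h1I, hII⟩ := hB z hz
  simp only [pd_pd_eq_fderiv_fderiv hF] at h11 hI1 h1I hII
  set A := fderiv ℝ (fderiv ℝ F) z
  have hB0 := hB.nonneg hz
  have h1 := (A 1).opNorm_le_two_mul_of_norm_apply_one_le_of_norm_apply_I_le hB0 h11 h1I
  have hI := (A I).opNorm_le_two_mul_of_norm_apply_one_le_of_norm_apply_I_le hB0 hI1 hII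
  linarith [A.opNorm_le_two_mul_of_norm_apply_one_le_of_norm_apply_I_le (by linarith) h1 hI]

/-- The Taylor bound is proved on the open disc, where `F` is twice differentiable, and
extended to its closure by continuity. -/
theorem IsC2Bound.norm_le_mul_sq {r : ℝ} (hr : 0 < r) (hF : ContDiffOn ℝ 2 F (closedBall 0 r))
    (hF0 : F 0 = 0) (hFx : pd 1 F 0 = 0) (hFy : pd I F 0 = 0)
    (hB : IsC2Bound F (closedBall 0 r) B) (hz : z ∈ closedBall 0 r) :
    ‖F z‖ ≤ 4 * B * ‖z‖ ^ 2 := by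
  have hCA : ∀ y ∈ ball (0 : ℂ) r, ContDiffAt ℝ 2 F y := fun y hy =>
    hF.contDiffAt (closedBall_mem_nhds_of_mem hy)
  have hD2 : ∀ y ∈ ball (0 : ℂ) r, DifferentiableAt ℝ (fderiv ℝ F) y := fun y hy =>
    ((hCA y hy).fderiv_right (m := 1) le_rfl).differentiableAt one_ne_zero
  have hball : ∀ y ∈ ball (0 : ℂ) r, ‖F y‖ ≤ 4 * B * ‖y‖ ^ 2 := fun y hy =>
    (convex_ball 0 r).norm_le_mul_sq_of_norm_fderiv_fderiv_le (mem_ball_self hr)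
      (fun x hx => (hCA x hx).differentiableAt two_ne_zero) hD2
      (fun x hx => hB.norm_fderiv_fderiv_le (ball_subset_closedBall hx) (hD2 x hx))
      hF0 (fderiv_eq_zero_of_pd_eq_zero hFx hFy) hy
  rw [← closure_ball 0 hr.ne'] at hz hF
  exact le_on_closure hball hF.continuousOn.norm (by fun_prop) hz

end PartialDerivatives

theorem sub_one_mul_norm_le_norm_add_mul_conj (c : ℝ) (ζ : ℂ) :
    (|c| - 1) * ‖ζ‖ ≤ ‖ζ + c * conj ζ‖ := by
  have := norm_sub_norm_le (c * conj ζ) (-ζ)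
  rw [sub_neg_eq_add, add_comm, norm_mul, norm_real, Real.norm_eq_abs, norm_conj,
    norm_neg] at this
  linarith

theorem norm_div_sq_le_of_norm_le_mul_sq {c w ζ : ℂ} {K k : ℝ} (hk : 0 < k) (hζ : ζ ≠ 0)
    (hc : ‖c‖ ≤ K * ‖ζ‖ ^ 2) (hw : k * ‖ζ‖ ≤ ‖w‖) : ‖c / w ^ 2‖ ≤ K / k ^ 2 := by
  have hζ' : 0 < ‖ζ‖ := norm_pos_iff.mpr hζ
  have hw' : 0 < ‖w‖ := (mul_pos hk hζ').trans_le hw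
  rw [norm_div, norm_pow, div_le_div_iff₀ (by positivity) (by positivity)]
  calc ‖c‖ * k ^ 2 ≤ K * ‖ζ‖ ^ 2 * k ^ 2 := by gcongr
    _ = K * (k * ‖ζ‖) ^ 2 := by ring
    _ ≤ K * ‖w‖ ^ 2 := by
        have hK : 0 ≤ K := nonneg_of_mul_nonneg_left ((norm_nonneg c).trans hc) (by positivity)
        gcongr

theorem norm_one_sub_cpow_one_half_le (u : ℂ) : ‖1 - (1 + u) ^ (1 / 2 : ℂ)‖ ≤ ‖u‖ := by
  set s := (1 + u) ^ (1 / 2 : ℂ)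
  have hre : 0 ≤ s.re := by
    simp only [s, one_div, cpow_inv_two_re]
    positivity
  have h1s : 1 ≤ ‖1 + s‖ := by
    calc (1 : ℝ) ≤ (1 + s).re := by simp [hre]
      _ ≤ ‖1 + s‖ := re_le_norm _
  have hs : s ^ 2 = 1 + u := by simp [s]
  have hprod : ‖1 - s‖ * ‖1 + s‖ = ‖u‖ := by
    rw [← norm_mul, ← norm_neg u]
    congr 1
    linear_combination -hs
  nlinarith [norm_nonneg (1 - s)]

section QuadraticFormula

variable {a w c f : ℂ}

theorem quadratic_eq_zero_of_eq_cpow (ha : a ≠ 0) (hw : w ≠ 0)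
    (hf : f = -(w / (2 * a)) * (1 - (1 + 4 * a * c / w ^ 2) ^ ((1 : ℂ) / 2))) :
    a * f ^ 2 + w * f - c = 0 := by
  set s := (1 + 4 * a * c / w ^ 2) ^ ((1 : ℂ) / 2)
  have hc : c = (s ^ 2 - 1) * w ^ 2 / (4 * a) := by
    simp only [s, one_div, cpow_ofNat_inv_pow]
    field_simp
    ring
  rw [hf, hc]
  field_simp
  ring

theorem norm_div_le_of_eq_cpow
    (hf : f = -(w / (2 * a)) * (1 - (1 + 4 * a * c / w ^ 2) ^ ((1 : ℂ) / 2))) :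
    ‖f / w‖ ≤ ‖4 * a * c / w ^ 2‖ / (2 * ‖a‖) := by
  rcases eq_or_ne w 0 with rfl | hw
  · simp
  have hfw : f / w = -(1 - (1 + 4 * a * c / w ^ 2) ^ ((1 : ℂ) / 2)) / (2 * a) := by
    rw [hf]
    field_simp
  rw [hfw, norm_div, norm_neg, norm_mul, norm_ofNat]
  gcongr
  exact norm_one_sub_cpow_one_half_le _

end QuadraticFormula

/-- Let `γ > 1/2`, `r > 0` and let `F` be `C²` on the closed disc
`D̄_r(0)`, vanishing at `0` together with its first partial derivatives, with
`‖F‖_{C²} ≤ B ≤ (2γ−1)³/(2¹⁴γ³)`. Then for each `ζ ∈ D̄_r(0)`, `ζ ≠ 0`, one has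
`|4γF(ζ)/(ζ + 2γζ̄)²| < 1/4`; and the value
`f = −((ζ + 2γζ̄)/(2γ))(1 − √(1 + 4γF(ζ)/(ζ + 2γζ̄)²))` (principal branch, via `cpow`)
satisfies `γ f² + (ζ + 2γζ̄) f − F(ζ) = 0`, `|f/(ζ + 2γζ̄)| ≤ 8B/(2γ−1)²`,
and `|f| ≤ |ζ + 2γζ̄|/(8γ)`. -/
theorem quadratic_solution_bounds (γ r : ℝ) (hγ : 1/2 < γ) (hr : 0 < r) (F : ℂ → ℂ)
    (hF : ContDiffOn ℝ 2 F (closedBall (0 : ℂ) r))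
    (hF0 : F 0 = 0) (hFx : pd 1 F 0 = 0) (hFy : pd Complex.I F 0 = 0)
    (B : ℝ) (hB : IsC2Bound F (closedBall (0 : ℂ) r) B)
    (hBle : B ≤ (2*γ - 1)^3 / (2^14 * γ^3))
    (ζ : ℂ) (hζ : ζ ∈ closedBall (0 : ℂ) r) (hζ0 : ζ ≠ 0) :
    ‖4 * (γ : ℂ) * F ζ / (ζ + 2*(γ:ℂ)*conj ζ)^2‖ < 1/4 ∧
    ∀ f : ℂ, f = -((ζ + 2*(γ:ℂ)*conj ζ)/(2*(γ:ℂ))) *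
        (1 - (1 + 4*(γ:ℂ)*F ζ/(ζ + 2*(γ:ℂ)*conj ζ)^2) ^ ((1:ℂ)/2)) →
      ((γ : ℂ) * f^2 + (ζ + 2*(γ:ℂ)*conj ζ) * f - F ζ = 0 ∧
       ‖f / (ζ + 2*(γ:ℂ)*conj ζ)‖ ≤ 8*B/(2*γ - 1)^2 ∧
       ‖f‖ ≤ ‖ζ + 2*(γ:ℂ)*conj ζ‖ / (8*γ)) := by
  set w := ζ + 2 * (γ : ℂ) * conj ζ
  have hγ0 : 0 < γ := by linarith
  have hγ1 : 0 < 2 * γ - 1 := by linarith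
  have hnγ : ‖(γ : ℂ)‖ = γ := by simp [hγ0.le]
  have hw : (2 * γ - 1) * ‖ζ‖ ≤ ‖w‖ := by
    simpa [abs_of_pos hγ0] using sub_one_mul_norm_le_norm_add_mul_conj (2 * γ) ζ
  have hw0 : w ≠ 0 := norm_pos_iff.mp ((by positivity : 0 < (2 * γ - 1) * ‖ζ‖).trans_le hw)
  have hFζ : ‖4 * (γ : ℂ) * F ζ‖ ≤ 16 * γ * B * ‖ζ‖ ^ 2 := by
    rw [norm_mul, norm_mul, hnγ, norm_ofNat]
    nlinarith [hB.norm_le_mul_sq hr hF hF0 hFx hFy hζ]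
  have hu := norm_div_sq_le_of_norm_le_mul_sq hγ1 hζ0 hFζ hw
  have hu4 : 16 * γ * B / (2 * γ - 1) ^ 2 < 1 / 4 := by
    rw [div_lt_iff₀ (by positivity)]
    rw [le_div_iff₀ (by positivity)] at hBle
    nlinarith [pow_pos hγ1 3, pow_pos hγ0 3]
  refine ⟨hu.trans_lt hu4, fun f hf => ?_⟩
  have hfw : ‖f / w‖ ≤ ‖4 * (γ : ℂ) * F ζ / w ^ 2‖ / (2 * γ) := by
    simpa only [hnγ] using norm_div_le_of_eq_cpow hf
  refine ⟨quadratic_eq_zero_of_eq_cpow (ofReal_ne_zero.mpr hγ0.ne') hw0 hf, ?_, ?_⟩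
  · calc ‖f / w‖ ≤ 16 * γ * B / (2 * γ - 1) ^ 2 / (2 * γ) := hfw.trans (by gcongr)
      _ = 8 * B / (2 * γ - 1) ^ 2 := by field_simp; ring
  · calc ‖f‖ = ‖f / w‖ * ‖w‖ := by rw [← norm_mul, div_mul_cancel₀ f hw0]
      _ ≤ 1 / 4 / (2 * γ) * ‖w‖ := by
          gcongr
          exact hfw.trans (by gcongr; exact hu.trans hu4.le)
      _ = ‖w‖ / (8 * γ) := by ring
end
end

section
/- Let γ > 1/2, set α = (2γ−1)/(32γ²), and define the polynomial ψ : ℂ² → ℂ by ψ(z₁, z₂) = (1/4)(z₁² − z₂²) + 2α z₁ z₂. Then for all ζ, c ∈ ℂ with |c| ≤ α|ζ| one has Re ψ(ζ, \bar ζ + c) ≥ (3/8) α |ζ|². In particular, Re ψ(ζ, \bar ζ + c) ≥ 0 with equality only when ζ = 0. -/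
open Complex ComplexConjugate

/-!
Write `ψ(ζ, ζ̄ + c) = ¼(ζ² − ζ̄²) + 2α|ζ|² + E` with `E = 2αζc − ζ̄c/2 − c²/4`. The first term is
purely imaginary, and `|c| ≤ α|ζ|` gives `|E| ≤ (α/2 + 9α²/4)|ζ|²`, so
`Re ψ ≥ (3α/2 − 9α²/4)|ζ|²`, which is at least `(3/8)α|ζ|²` as soon as `α ≤ 1/2`.
-/

noncomputable def psi (α : ℝ) (z₁ z₂ : ℂ) : ℂ :=
  (1/4) * (z₁^2 - z₂^2) + 2 * (α : ℂ) * z₁ * z₂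

lemma psi_graph_re_eq (α : ℝ) (ζ c : ℂ) :
    (psi α ζ (conj ζ + c)).re =
      2 * α * ‖ζ‖^2 + (2 * α * ζ * c - conj ζ * c / 2 - c^2 / 4).re := by
  rw [Complex.sq_norm, Complex.normSq_apply]
  simp only [psi, add_re, sub_re, mul_re, mul_im, add_im, sub_im, div_re, div_im, conj_re,
    conj_im, ofReal_re, ofReal_im, one_re, one_im, re_ofNat, im_ofNat, normSq_ofNat, pow_two]
  ring

lemma norm_psi_graph_error_le {α : ℝ} (hα : 0 ≤ α) {ζ c : ℂ} (hc : ‖c‖ ≤ α * ‖ζ‖) :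
    ‖2 * α * ζ * c - conj ζ * c / 2 - c^2 / 4‖ ≤ (α / 2 + 9 / 4 * α^2) * ‖ζ‖^2 := by
  have hζc : ‖ζ‖ * ‖c‖ ≤ α * ‖ζ‖^2 := by
    nlinarith [mul_le_mul_of_nonneg_left hc (norm_nonneg ζ)]
  have hcc : ‖c‖^2 ≤ α^2 * ‖ζ‖^2 := by
    nlinarith [norm_nonneg c, mul_le_mul hc hc (norm_nonneg c) (by positivity)]
  calc ‖2 * α * ζ * c - conj ζ * c / 2 - c^2 / 4‖
      ≤ ‖2 * α * ζ * c‖ + ‖conj ζ * c / 2‖ + ‖c^2 / 4‖ :=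
        (norm_sub_le _ _).trans (add_le_add_left (norm_sub_le _ _) _)
    _ = 2 * α * (‖ζ‖ * ‖c‖) + ‖ζ‖ * ‖c‖ / 2 + ‖c‖^2 / 4 := by
      simp only [norm_mul, norm_div, norm_pow, Complex.norm_conj, Complex.norm_ofNat,
        Complex.norm_real, Real.norm_of_nonneg hα]
      ring
    _ ≤ (α / 2 + 9 / 4 * α^2) * ‖ζ‖^2 := by nlinarith

lemma psi_graph_re_lower_bound {α : ℝ} (hα₀ : 0 ≤ α) (hα : α ≤ 1/2) {ζ c : ℂ}
    (hc : ‖c‖ ≤ α * ‖ζ‖) :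
    3 / 8 * α * ‖ζ‖^2 ≤ (psi α ζ (conj ζ + c)).re := by
  have hE := (abs_le.mp ((abs_re_le_norm _).trans (norm_psi_graph_error_le hα₀ hc))).1
  rw [psi_graph_re_eq]
  nlinarith [mul_nonneg (mul_nonneg hα₀ (sub_nonneg.mpr hα)) (sq_nonneg ‖ζ‖)]

lemma alpha_pos_of_half_lt {γ : ℝ} (hγ : 1/2 < γ) : 0 < (2*γ - 1)/(32*γ^2) := by
  have : 0 < γ := by linarith
  exact div_pos (by linarith) (by positivity)

lemma alpha_le_one_thirtysecond (γ : ℝ) : (2*γ - 1)/(32*γ^2) ≤ 1/32 := by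
  rcases eq_or_ne γ 0 with rfl | hγ
  · norm_num
  rw [div_le_div_iff₀ (by positivity) (by norm_num)]
  nlinarith [sq_nonneg (γ - 1)]

/-- For `γ > 1/2`, `α = (2γ−1)/(32γ²)` and
`ψ(z₁,z₂) = (1/4)(z₁² − z₂²) + 2α z₁ z₂`, one has
`Re ψ(ζ, ζ̄ + c) ≥ (3/8) α |ζ|²` whenever `|c| ≤ α |ζ|`; in particular the real part is
nonnegative and vanishes only for `ζ = 0`. -/
theorem re_psi_graph_S1_lower_bound (γ : ℝ) (hγ : 1/2 < γ) (α : ℝ)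
    (hα : α = (2*γ - 1)/(32*γ^2)) (ψ : ℂ → ℂ → ℂ)
    (hψ : ∀ z₁ z₂ : ℂ, ψ z₁ z₂ = (1/4) * (z₁^2 - z₂^2) + 2 * (α : ℂ) * z₁ * z₂)
    (ζ c : ℂ) (hc : ‖c‖ ≤ α * ‖ζ‖) :
    (3/8) * α * ‖ζ‖^2 ≤ (ψ ζ (conj ζ + c)).re ∧
    (0 ≤ (ψ ζ (conj ζ + c)).re ∧ ((ψ ζ (conj ζ + c)).re = 0 → ζ = 0)) := by
  have hα₀ : 0 < α := hα ▸ alpha_pos_of_half_lt hγ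
  have hα_le : α ≤ 1/32 := hα ▸ alpha_le_one_thirtysecond γ
  have hψ_eq : ψ = psi α := funext₂ hψ
  have key := hψ_eq ▸ psi_graph_re_lower_bound hα₀.le (by linarith) hc
  refine ⟨key, le_trans (by positivity) key, fun h => ?_⟩
  have : ‖ζ‖^2 ≤ 0 := by nlinarith
  exact norm_eq_zero.mp (pow_eq_zero_iff two_ne_zero |>.mp (le_antisymm this (sq_nonneg _)))
end

section
/- Let γ > 1/2, set α = (2γ−1)/(32γ²), and define the polynomial ψ : ℂ² → ℂ by ψ(z₁, z₂) = (1/4)(z₁² − z₂²) + 2α z₁ z₂. Then for all ζ, c ∈ ℂ with |c| ≤ α|ζ| one has Re ψ(ζ, −ζ/γ − \bar ζ + c) ≤ −3α |ζ|². In particular, Re ψ(ζ, −ζ/γ − \bar ζ + c) ≤ 0 with equality only when ζ = 0. -/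
open Complex ComplexConjugate

lemma psi_add_right (α : ℝ) (z w c : ℂ) :
    psi α z (w + c) = psi α z w + c * (2 * α * z - w / 2 - c / 4) := by
  unfold psi; ring

lemma re_psi_neg_smul_sub_conj (α t : ℝ) (ζ : ℂ) :
    (psi α ζ (-(t * ζ) - conj ζ)).re
      = -(t^2/4 + 2*α*t) * (ζ.re^2 - ζ.im^2) - (t/2 + 2*α) * (ζ.re^2 + ζ.im^2) := by
  simp only [psi, one_div, pow_two, add_re, mul_re, inv_re, re_ofNat, normSq_ofNat,
    div_self_mul_self', sub_re, neg_re, ofReal_re, ofReal_im, zero_mul, sub_zero, conj_re, sub_im,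
    neg_im, mul_im, add_zero, conj_im, sub_neg_eq_add, inv_im, im_ofNat, neg_zero, zero_div,
    mul_zero, neg_add_rev]
  ring

lemma re_psi_neg_smul_sub_conj_le {α t : ℝ} (ht₀ : 0 ≤ t) (ht₂ : t ≤ 2)
    (hα : 32 * α = t * (2 - t)) (ζ : ℂ) :
    (psi α ζ (-(t * ζ) - conj ζ)).re ≤ -(6 * α * ‖ζ‖^2) := by
  rw [re_psi_neg_smul_sub_conj, Complex.sq_norm, Complex.normSq_apply]
  have hx := mul_nonneg (mul_nonneg ht₀ (sub_nonneg.2 ht₂)) (sq_nonneg ζ.re)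
  have hy := mul_nonneg (mul_nonneg ht₀ (sub_nonneg.2 ht₂)) (sq_nonneg ζ.im)
  nlinarith [mul_nonneg ht₀ (sq_nonneg ζ.re), mul_nonneg (sub_nonneg.2 ht₂) (sq_nonneg ζ.im)]

lemma norm_neg_smul_sub_conj_le {t : ℝ} (ht₀ : 0 ≤ t) (ht₂ : t ≤ 2) (ζ : ℂ) :
    ‖-(t * ζ) - conj ζ‖ ≤ 3 * ‖ζ‖ := by
  calc ‖-(t * ζ) - conj ζ‖ ≤ ‖(t : ℂ) * ζ‖ + ‖conj ζ‖ := by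
        rw [← norm_neg (t * ζ)]; exact norm_sub_le _ _
    _ = t * ‖ζ‖ + ‖ζ‖ := by rw [norm_mul, Complex.norm_conj, Complex.norm_real, Real.norm_of_nonneg ht₀]
    _ ≤ 3 * ‖ζ‖ := by nlinarith [norm_nonneg ζ]

lemma norm_perturbation_le {α : ℝ} (hα₀ : 0 ≤ α) (hα : α ≤ 1/32) {ζ w c : ℂ}
    (hw : ‖w‖ ≤ 3 * ‖ζ‖) (hc : ‖c‖ ≤ α * ‖ζ‖) :
    ‖c * (2 * α * ζ - w / 2 - c / 4)‖ ≤ 3 * α * ‖ζ‖^2 := by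
  have hfactor : ‖2 * (α : ℂ) * ζ - w / 2 - c / 4‖ ≤ 3 * ‖ζ‖ := by
    calc ‖2 * (α : ℂ) * ζ - w / 2 - c / 4‖ ≤ ‖2 * (α : ℂ) * ζ‖ + ‖w / 2‖ + ‖c / 4‖ :=
          norm_sub_le_of_le (norm_sub_le _ _) le_rfl
      _ = 2 * α * ‖ζ‖ + ‖w‖ / 2 + ‖c‖ / 4 := by
          simp [Complex.norm_real, abs_of_nonneg hα₀]
      _ ≤ 3 * ‖ζ‖ := by nlinarith [norm_nonneg ζ]
  calc ‖c * (2 * α * ζ - w / 2 - c / 4)‖ = ‖c‖ * ‖2 * (α : ℂ) * ζ - w / 2 - c / 4‖ := norm_mul _ _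
    _ ≤ (α * ‖ζ‖) * (3 * ‖ζ‖) := mul_le_mul hc hfactor (norm_nonneg _) (by positivity)
    _ = 3 * α * ‖ζ‖^2 := by ring

lemma re_psi_graph_le {α t : ℝ} (ht₀ : 0 ≤ t) (ht₂ : t ≤ 2) (hα : 32 * α = t * (2 - t))
    {ζ c : ℂ} (hc : ‖c‖ ≤ α * ‖ζ‖) :
    (psi α ζ (-(t * ζ) - conj ζ + c)).re ≤ -(3 * α * ‖ζ‖^2) := by
  have hα₀ : 0 ≤ α := by nlinarith
  have hα₁ : α ≤ 1/32 := by nlinarith [sq_nonneg (t - 1)]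
  rw [psi_add_right, add_re]
  have hperturb := (re_le_norm _).trans
    (norm_perturbation_le hα₀ hα₁ (norm_neg_smul_sub_conj_le ht₀ ht₂ ζ) hc)
  linarith [re_psi_neg_smul_sub_conj_le ht₀ ht₂ hα ζ]

/-- For `γ > 1/2`, `α = (2γ−1)/(32γ²)` and
`ψ(z₁,z₂) = (1/4)(z₁² − z₂²) + 2α z₁ z₂`, one has
`Re ψ(ζ, −ζ/γ − ζ̄ + c) ≤ −3α|ζ|²` whenever `|c| ≤ α |ζ|`; in particular the real part is
nonpositive and vanishes only for `ζ = 0`. -/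
theorem re_psi_graph_S2_upper_bound (γ : ℝ) (hγ : 1/2 < γ) (α : ℝ)
    (hα : α = (2*γ - 1)/(32*γ^2)) (ψ : ℂ → ℂ → ℂ)
    (hψ : ∀ z₁ z₂ : ℂ, ψ z₁ z₂ = (1/4) * (z₁^2 - z₂^2) + 2 * (α : ℂ) * z₁ * z₂)
    (ζ c : ℂ) (hc : ‖c‖ ≤ α * ‖ζ‖) :
    (ψ ζ (-ζ/(γ : ℂ) - conj ζ + c)).re ≤ -(3 * α * ‖ζ‖^2) ∧
    ((ψ ζ (-ζ/(γ : ℂ) - conj ζ + c)).re ≤ 0 ∧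
      ((ψ ζ (-ζ/(γ : ℂ) - conj ζ + c)).re = 0 → ζ = 0)) := by
  have hγ₀ : 0 < γ := by linarith
  have hα₀ : 0 < α := by rw [hα]; exact div_pos (by linarith) (by positivity)
  have hψ' : ψ = psi α := funext₂ hψ
  have hw : -ζ / (γ : ℂ) - conj ζ = -(((γ⁻¹ : ℝ) : ℂ) * ζ) - conj ζ := by
    push_cast; ring
  have hbound : (ψ ζ (-ζ/(γ : ℂ) - conj ζ + c)).re ≤ -(3 * α * ‖ζ‖^2) := by
    rw [hψ', hw]
    refine re_psi_graph_le (by positivity) ?_ ?_ hc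
    · rw [inv_le_comm₀ hγ₀ two_pos]; linarith
    · rw [hα]; field_simp
  have hnorm : 0 ≤ 3 * α * ‖ζ‖^2 := by positivity
  refine ⟨hbound, by linarith, fun hzero => ?_⟩
  have : ‖ζ‖^2 = 0 := by nlinarith
  simpa using this
end
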